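/- For every graph G and odd k, the graphs Γ_k(Ω_k(G)) and G are homomorphically equivalent, as are Γ_k(Λ_k(G)) and G. -/

import Mathlib

/-- A finite graph: symmetric edge relation, loops allowed. -/
structure FGraph where
  V : Type
  Adj : V → V → Prop
  symm : ∀ {u v : V}, Adj u v → Adj v u
  [fin : Finite V]

attribute [instance] FGraph.fin

/-- Existence of a graph homomorphism. -/
def FGraph.Hom (G H : FGraph) : Prop :=
  ∃ f : G.V → H.V, ∀ {u v : G.V}, G.Adj u v → H.Adj (f u) (f v)

/-- Homomorphic equivalence. -/
def FGraph.HomEquiv (G H : FGraph) : Prop := G.Hom H ∧ H.Hom G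

/-- Tensor (categorical) product of graphs. -/
def FGraph.prod (G H : FGraph) : FGraph where
  V := G.V × H.V
  Adj := fun a b => G.Adj a.1 b.1 ∧ H.Adj a.2 b.2
  symm := fun h => ⟨G.symm h.1, H.symm h.2⟩

/-- A walk of length `n` from `u` to `v`. -/
def FGraph.Walk (G : FGraph) (n : ℕ) (u v : G.V) : Prop :=
  ∃ w : ℕ → G.V, w 0 = u ∧ w n = v ∧ ∀ i < n, G.Adj (w i) (w (i+1))

/-- The `k`-th power graph `Γ_k(G)`. -/
def FGraph.pow (G : FGraph) (k : ℕ) : FGraph where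
  V := G.V
  Adj := fun u v => G.Walk k u v
  symm := by
    rintro u v ⟨w, h0, hk, hadj⟩
    refine ⟨fun i => w (k - i), by simpa using hk, by simpa using h0, fun i hi => ?_⟩
    have h1 : k - (i+1) + 1 = k - i := by omega
    have h2 := hadj (k - (i+1)) (by omega)
    rw [h1] at h2
    exact G.symm h2

/-- Raw vertices for the `k`-subdivision: original vertices plus internal path
vertices `(u,v,i)` with `uv` an edge and `0 < i < k`. -/
abbrev FGraph.SubdivRaw (G : FGraph) (k : ℕ) : Type :=
  G.V ⊕ {p : G.V × G.V × Fin (k+1) // G.Adj p.1 p.2.1 ∧ 0 < p.2.2.val ∧ p.2.2.val < k}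

/-- Identification `(u,v,i) ~ (v,u,k-i)` of internal vertices. -/
def FGraph.subdivRel (G : FGraph) (k : ℕ) : G.SubdivRaw k → G.SubdivRaw k → Prop :=
  fun a b => ∃ p q, a = Sum.inr p ∧ b = Sum.inr q ∧
    p.1.1 = q.1.2.1 ∧ p.1.2.1 = q.1.1 ∧ p.1.2.2.val + q.1.2.2.val = k

/-- Adjacency on raw subdivision vertices. -/
def FGraph.subdivAdjRaw (G : FGraph) (k : ℕ) : G.SubdivRaw k → G.SubdivRaw k → Prop := fun a b =>
  match a, b with
  | .inl u, .inl v => k = 1 ∧ G.Adj u v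
  | .inl u, .inr p => (p.1.1 = u ∧ p.1.2.2.val = 1) ∨ (p.1.2.1 = u ∧ p.1.2.2.val = k - 1)
  | .inr p, .inl u => (p.1.1 = u ∧ p.1.2.2.val = 1) ∨ (p.1.2.1 = u ∧ p.1.2.2.val = k - 1)
  | .inr p, .inr q =>
      (p.1.1 = q.1.1 ∧ p.1.2.1 = q.1.2.1 ∧
        (p.1.2.2.val + 1 = q.1.2.2.val ∨ q.1.2.2.val + 1 = p.1.2.2.val)) ∨
      (p.1.1 = q.1.2.1 ∧ p.1.2.1 = q.1.1 ∧
        (p.1.2.2.val + q.1.2.2.val = k + 1 ∨ p.1.2.2.val + q.1.2.2.val = k - 1))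

/-- The `k`-subdivision `Λ_k(G)`: every edge replaced by a path with `k` edges. -/
def FGraph.subdiv (G : FGraph) (k : ℕ) : FGraph where
  V := Quot (G.subdivRel k)
  Adj := fun x y => ∃ a b, Quot.mk _ a = x ∧ Quot.mk _ b = y ∧
    (G.subdivAdjRaw k a b ∨ G.subdivAdjRaw k b a)
  symm := fun ⟨a, b, ha, hb, h⟩ => ⟨b, a, hb, ha, h.symm⟩

/-- `A` joined to `B`: every vertex of `A` adjacent to every vertex of `B`. -/
def FGraph.Join (G : FGraph) (A B : Set G.V) : Prop := ∀ a ∈ A, ∀ b ∈ B, G.Adj a b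

/-- Vertices of `Ω_{2ℓ+1}(G)`: tuples `(A_0, …, A_ℓ)` of vertex subsets with `A_0`
a singleton and `A_{i-1}` joined to `A_i`. -/
abbrev FGraph.OmegaVert (G : FGraph) (l : ℕ) : Type :=
  {A : Fin (l+1) → Set G.V //
    (∃ v, A 0 = {v}) ∧ ∀ i : Fin l, G.Join (A i.castSucc) (A i.succ)}

/-- The graph `Ω_{2ℓ+1}(G)`, right adjoint to the `(2ℓ+1)`-st power functor. -/
def FGraph.omega (G : FGraph) (l : ℕ) : FGraph where
  V := G.OmegaVert l
  Adj := fun A B =>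
    (∀ i : Fin l, A.1 i.castSucc ⊆ B.1 i.succ ∧ B.1 i.castSucc ⊆ A.1 i.succ) ∧
    G.Join (A.1 (Fin.last l)) (B.1 (Fin.last l))
  symm := fun {A B} h =>
    ⟨fun i => ⟨(h.1 i).2, (h.1 i).1⟩, fun b hb a ha => G.symm (h.2 a ha b hb)⟩

/-- A multiplicative graph. -/
def FGraph.Multiplicative (K : FGraph) : Prop :=
  ∀ G H : FGraph, (G.prod H).Hom K → G.Hom K ∨ H.Hom K

/-- A (thin) graph functor. -/
def IsGraphFunctor (F : FGraph → FGraph) : Prop :=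
  ∀ G H : FGraph, G.Hom H → (F G).Hom (F H)

/-!
Write `k = 2ℓ + 1`. A vertex `A` of `Ω_k(G)` has a root, the element of the singleton `A₀`;
along a walk of length `t ≤ ℓ` starting at `A`, the set `A₀` propagates into the `t`-th entry,
so the middle edge of a walk of length `k` joins the roots of its two ends: this is
`Γ_k(Ω_k(G)) → G`. The paths subdividing the edges of `G` give `G → Γ_k(Λ_k(G))`. Finally
there is an explicit homomorphism `Λ_k(G) → Ω_k(G)`; applying the functor `Γ_k` to it and
composing with the two maps above gives both equivalences.
-/

namespace FGraph

variable {G H K : FGraph}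

theorem Hom.trans (hGH : G.Hom H) (hHK : H.Hom K) : G.Hom K :=
  let ⟨f, hf⟩ := hGH
  let ⟨g, hg⟩ := hHK
  ⟨g ∘ f, fun h => hg (hf h)⟩

theorem Hom.pow (k : ℕ) : G.Hom H → (G.pow k).Hom (H.pow k) := by
  rintro ⟨f, hf⟩
  exact ⟨f, fun ⟨w, h0, hk, hw⟩ => ⟨f ∘ w, by simp [h0], by simp [hk], fun i hi => hf (hw i hi)⟩⟩

namespace Walk

variable {m n : ℕ} {u v : G.V}

theorem eq_of_zero : G.Walk 0 u v → u = v := by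
  rintro ⟨w, rfl, rfl, _⟩
  rfl

theorem adj_of_one : G.Walk 1 u v → G.Adj u v := by
  rintro ⟨w, rfl, rfl, hw⟩
  exact hw 0 one_pos

theorem symm (h : G.Walk n u v) : G.Walk n v u :=
  (G.pow n).symm h

theorem split : G.Walk (m + n) u v → ∃ c, G.Walk m u c ∧ G.Walk n c v := by
  rintro ⟨w, h0, hmn, hw⟩
  exact ⟨w m, ⟨w, h0, rfl, fun i hi => hw i (by omega)⟩,
    ⟨fun i => w (m + i), by simp, hmn, fun i hi => hw (m + i) (by omega)⟩⟩

end Walk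

section Omega

variable {l : ℕ}

noncomputable def OmegaVert.root (A : G.OmegaVert l) : G.V := A.2.1.choose

theorem OmegaVert.root_mem (A : G.OmegaVert l) : A.root ∈ A.1 0 := by
  rw [A.2.1.choose_spec]
  rfl

theorem OmegaVert.zero_subset_of_walk {t : ℕ} (ht : t ≤ l) {A B : G.OmegaVert l} :
    (G.omega l).Walk t A B → A.1 0 ⊆ B.1 ⟨t, by omega⟩ := by
  induction t generalizing B with
  | zero => exact fun h => Walk.eq_of_zero h ▸ subset_rfl
  | succ t ih =>
    intro h
    obtain ⟨C, hAC, hCB⟩ := Walk.split h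
    exact (ih (by omega) hAC).trans ((Walk.adj_of_one hCB).1 ⟨t, by omega⟩).1

theorem pow_omega_hom : ((G.omega l).pow (2 * l + 1)).Hom G := by
  refine ⟨OmegaVert.root, fun {A B} h => ?_⟩
  have h' : (G.omega l).Walk (l + (1 + l)) A B := by rwa [show l + (1 + l) = 2 * l + 1 by omega]
  obtain ⟨C, hAC, hCB⟩ := Walk.split h'
  obtain ⟨D, hCD, hDB⟩ := Walk.split hCB
  exact (Walk.adj_of_one hCD).2 _ (OmegaVert.zero_subset_of_walk le_rfl hAC A.root_mem)
    _ (OmegaVert.zero_subset_of_walk le_rfl hDB.symm B.root_mem)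

end Omega

section Subdiv

variable {k : ℕ} {u v : G.V}

def subdivPathRaw (huv : G.Adj u v) (i : ℕ) : G.SubdivRaw k :=
  if h : 0 < i ∧ i < k then .inr ⟨(u, v, ⟨i, by omega⟩), huv, h⟩
  else if i = 0 then .inl u else .inl v

theorem subdivAdjRaw_subdivPathRaw (huv : G.Adj u v) {i : ℕ} (hi : i < k) :
    G.subdivAdjRaw k (subdivPathRaw huv i) (subdivPathRaw huv (i + 1)) := by
  unfold subdivPathRaw
  split_ifs <;> simp only [subdivAdjRaw] <;> grind

theorem hom_pow_subdiv (hk : 0 < k) : G.Hom ((G.subdiv k).pow k) := by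
  refine ⟨fun u => Quot.mk _ (.inl u), fun {u v} huv => ?_⟩
  refine ⟨fun i => Quot.mk _ (subdivPathRaw huv i), ?_, ?_, fun i hi => ?_⟩
  · exact congrArg (Quot.mk _) (by simp [subdivPathRaw])
  · exact congrArg (Quot.mk _) (by simp [subdivPathRaw, hk.ne'])
  · exact ⟨_, _, rfl, rfl, Or.inl (subdivAdjRaw_subdivPathRaw huv hi)⟩

end Subdiv

section PathSet

variable (G) (l : ℕ)

/- Project `Λ_k(G)` onto `G` by sending the point at distance `p` from `u` on the path
subdividing `uv` to `u` if `p` is even and to `v` if `p` is odd (well defined as `k` is odd).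
For `j ≤ ℓ`, `starSet u j` and `pathSet u v i j` are the images under this projection of the
vertices reachable by a walk of length `j` from `u` and from the `i`-th point of that path. -/
def starSet (u : G.V) (j : ℕ) : Set G.V := {x | if j % 2 = 0 then x = u else G.Adj u x}

def pathSet (u v : G.V) (i j : ℕ) : Set G.V :=
  {x | if (i + j) % 2 = 0 then x = u ∨ 2 * l + 1 < i + j ∧ G.Adj v x
    else x = v ∨ i < j ∧ G.Adj u x}

variable {G l} {u v : G.V}

theorem join_starSet (u : G.V) (j : ℕ) : G.Join (G.starSet u j) (G.starSet u (j + 1)) := by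
  intro x hx y hy
  simp only [starSet, Set.mem_ofPred_eq] at hx hy
  grind [G.symm]

theorem pathSet_flip {i : ℕ} (hi : i ≤ 2 * l + 1) (j : ℕ) :
    G.pathSet l v u i j = G.pathSet l u v (2 * l + 1 - i) j := by
  ext x
  simp only [pathSet, Set.mem_ofPred_eq]
  grind

theorem pathSet_zero_eq_starSet (huv : G.Adj u v) {j : ℕ} (hj : j ≤ 2 * l + 1) :
    G.pathSet l u v 0 j = G.starSet u j := by
  ext x
  simp only [pathSet, starSet, Set.mem_ofPred_eq]
  grind

theorem exists_pathSet_zero_eq_singleton {i : ℕ} (hi : i ≤ 2 * l + 1) :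
    ∃ x, G.pathSet l u v i 0 = {x} := by
  refine ⟨if i % 2 = 0 then u else v, ?_⟩
  ext x
  simp only [pathSet, Set.mem_ofPred_eq, Set.mem_singleton_iff]
  grind

theorem join_pathSet (huv : G.Adj u v) {i i' j j' : ℕ} (hj : j ≤ l) (hj' : j' ≤ l)
    (h : i + j + 1 = i' + j' ∨ i' + j' + 1 = i + j) :
    G.Join (G.pathSet l u v i j) (G.pathSet l u v i' j') := by
  intro x hx y hy
  simp only [pathSet, Set.mem_ofPred_eq] at hx hy
  grind [G.symm]

theorem pathSet_subset_succ {i i' j : ℕ} (h : i + 1 = i' ∨ i' + 1 = i) :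
    G.pathSet l u v i j ⊆ G.pathSet l u v i' (j + 1) := by
  intro x hx
  simp only [pathSet, Set.mem_ofPred_eq] at hx ⊢
  grind

end PathSet

section SubdivToOmega

variable {l : ℕ} {u v : G.V}

def starVert (u : G.V) : G.OmegaVert l :=
  ⟨fun j => G.starSet u j, ⟨u, by ext; simp [starSet]⟩, fun j => join_starSet u j⟩

def pathVert (huv : G.Adj u v) (i : Fin (2 * l + 2)) : G.OmegaVert l :=
  ⟨fun j => G.pathSet l u v i j, exists_pathSet_zero_eq_singleton (by omega),
    fun j => join_pathSet huv (by omega) (by omega) (by simp; omega)⟩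

theorem pathVert_adj (huv : G.Adj u v) {i i' : Fin (2 * l + 2)}
    (h : i.val + 1 = i' ∨ i'.val + 1 = i) :
    (G.omega l).Adj (pathVert huv i) (pathVert huv i') :=
  ⟨fun _ => ⟨pathSet_subset_succ h, pathSet_subset_succ h.symm⟩,
    join_pathSet huv le_rfl le_rfl (by omega)⟩

theorem pathVert_flip (huv : G.Adj u v) (hvu : G.Adj v u) (i : Fin (2 * l + 2)) :
    pathVert hvu i = pathVert huv i.rev := by
  refine Subtype.ext (funext fun j => ?_)
  simp only [pathVert, Fin.val_rev]
  rw [pathSet_flip (by omega)]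
  congr 1
  omega

theorem pathVert_zero (huv : G.Adj u v) : pathVert huv 0 = starVert (l := l) u :=
  Subtype.ext (funext fun j => pathSet_zero_eq_starSet huv (by omega))

theorem pathVert_last (huv : G.Adj u v) : pathVert huv (Fin.last _) = starVert (l := l) v := by
  rw [← Fin.rev_zero, ← pathVert_flip huv (G.symm huv)]
  exact pathVert_zero (G.symm huv)

theorem starVert_adj_pathVert {w : G.V} (huv : G.Adj u v) {i : Fin (2 * l + 2)}
    (h : (u = w ∧ i.val = 1) ∨ (v = w ∧ i.val = 2 * l + 1 - 1)) :
    (G.omega l).Adj (starVert w) (pathVert huv i) := by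
  rcases h with ⟨rfl, hi⟩ | ⟨rfl, hi⟩
  · rw [← pathVert_zero huv]
    exact pathVert_adj huv (by simp [hi])
  · rw [← pathVert_last huv]
    exact pathVert_adj huv (by simp; omega)

def subdivRawToOmega : G.SubdivRaw (2 * l + 1) → G.OmegaVert l
  | .inl u => starVert u
  | .inr p => pathVert p.2.1 p.1.2.2

theorem subdivRawToOmega_eq_of_rel {a b : G.SubdivRaw (2 * l + 1)} :
    G.subdivRel (2 * l + 1) a b → subdivRawToOmega a = subdivRawToOmega b := by
  rintro ⟨⟨⟨u, v, i⟩, huv, _⟩, ⟨⟨v', u', i'⟩, hvu, _⟩, rfl, rfl, rfl, rfl, h⟩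
  dsimp only at hvu h
  simp only [subdivRawToOmega]
  rw [pathVert_flip huv hvu]
  congr 1
  ext
  simp only [Fin.val_rev]
  omega

theorem subdivRawToOmega_adj {a b : G.SubdivRaw (2 * l + 1)} :
    G.subdivAdjRaw (2 * l + 1) a b →
      (G.omega l).Adj (subdivRawToOmega a) (subdivRawToOmega b) := by
  rcases a with u | ⟨⟨u, v, i⟩, huv, _⟩ <;> rcases b with u' | ⟨⟨u', v', i'⟩, huv', _⟩ <;> intro h
  · obtain ⟨hl, huu'⟩ := h
    show (G.omega l).Adj (starVert u) (starVert u')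
    rw [← pathVert_zero huu', ← pathVert_last huu']
    exact pathVert_adj huu' (by simp; omega)
  · exact starVert_adj_pathVert huv' h
  · exact (G.omega l).symm (starVert_adj_pathVert huv h)
  · rcases h with ⟨rfl, rfl, h⟩ | ⟨rfl, rfl, h⟩
    · exact pathVert_adj huv h
    · dsimp only at huv' h
      simp only [subdivRawToOmega]
      rw [pathVert_flip huv huv']
      exact pathVert_adj huv (by simp; omega)

theorem subdiv_hom_omega : (G.subdiv (2 * l + 1)).Hom (G.omega l) := by
  refine ⟨Quot.lift subdivRawToOmega fun _ _ => subdivRawToOmega_eq_of_rel, ?_⟩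
  rintro _ _ ⟨a, b, rfl, rfl, h | h⟩
  · exact subdivRawToOmega_adj h
  · exact (G.omega l).symm (subdivRawToOmega_adj h)

end SubdivToOmega

end FGraph

/-- `Γ_k(Ω_k(G)) ↔ G` and `Γ_k(Λ_k(G)) ↔ G` for odd `k = 2ℓ+1`. -/
theorem pow_omega_pow_subdiv_equiv (G : FGraph) (l : ℕ) :
    ((G.omega l).pow (2*l+1)).HomEquiv G ∧
    ((G.subdiv (2*l+1)).pow (2*l+1)).HomEquiv G := by
  have hΛΩ : ((G.subdiv (2*l+1)).pow (2*l+1)).Hom ((G.omega l).pow (2*l+1)) :=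
    FGraph.subdiv_hom_omega.pow _
  have hΛ : G.Hom ((G.subdiv (2*l+1)).pow (2*l+1)) := FGraph.hom_pow_subdiv (by omega)
  have hΩ : ((G.omega l).pow (2*l+1)).Hom G := FGraph.pow_omega_hom
  exact ⟨⟨hΩ, hΛ.trans hΛΩ⟩, ⟨hΛΩ.trans hΩ, hΛ⟩⟩
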